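/- arXiv:1212.0687 — 3 statements merged into one kernel-verified Lean document; each statement's English description precedes it below -/
import Mathlib

section
/- The Korányi gauge on the Heisenberg group satisfies the quasi-norm triangle inequality needed for d to be a metric: d(x,z) ≤ d(x,y) + d(y,z) for all x, y, z ∈ ℍⁿ (equivalently, ‖x·y‖ ≤ ‖x‖ + ‖y‖). -/
open scoped BigOperators
noncomputable section

abbrev Heis (n : ℕ) := EuclideanSpace ℝ (Fin (2*n)) × ℝ

def symA (n : ℕ) (x y : EuclideanSpace ℝ (Fin (2*n))) : ℝ :=
  ∑ i : Fin n, (x ⟨i.val + n, by have := i.isLt; omega⟩ * y ⟨i.val, by have := i.isLt; omega⟩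
    - x ⟨i.val, by have := i.isLt; omega⟩ * y ⟨i.val + n, by have := i.isLt; omega⟩)

def hMul (n : ℕ) (x y : Heis n) : Heis n :=
  (x.1 + y.1, x.2 + y.2 + 2 * symA n x.1 y.1)

def hInv (n : ℕ) (x : Heis n) : Heis n := (-x.1, -x.2)

def Knorm (n : ℕ) (x : Heis n) : ℝ := (‖x.1‖^4 + x.2^2) ^ ((1:ℝ)/4)

def Kdist (n : ℕ) (x y : Heis n) : ℝ := Knorm n (hMul n (hInv n y) x)

def isotropic (n : ℕ) (W : Submodule ℝ (EuclideanSpace ℝ (Fin (2*n)))) : Prop :=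
  ∀ x ∈ W, ∀ y ∈ W, symA n x y = 0

def plane (n : ℕ) (p : Heis n) (W : Submodule ℝ (EuclideanSpace ℝ (Fin (2*n)))) : Set (Heis n) :=
  {z | ∃ w ∈ W, z = hMul n p (w, (0:ℝ))}

def projH (n : ℕ) (W : Submodule ℝ (EuclideanSpace ℝ (Fin (2*n)))) (x : Heis n) : Heis n :=
  ((Submodule.orthogonalProjection W x.1 : EuclideanSpace ℝ (Fin (2*n))), 0)

def PV (n : ℕ) (p : Heis n) (W : Submodule ℝ (EuclideanSpace ℝ (Fin (2*n)))) (x : Heis n) : Heis n :=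
  hMul n p (projH n W (hMul n (hInv n p) x))

/-!
Identify `ℝ^{2n}` with `ℂ^n` via `x ↦ (x_i + x_{i+n} I)_i`; then `⟪x, y⟫ - A(x, y) I` is the
Hermitian inner product. Send `(x', t)` to `w = |x'|² + t I ∈ ℂ`, so that `‖(x', t)‖² = |w|`. The
group law becomes `w(x·y) = w(x) + w(y) + 2 conj ⟪x', y'⟫_ℂ`, and Cauchy–Schwarz gives
`|w(x·y)| ≤ ‖x‖² + ‖y‖² + 2 |x'| |y'| ≤ (‖x‖ + ‖y‖)²`. Left invariance of `d` turns this into the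
triangle inequality.
-/

open ComplexConjugate

theorem Fin.sum_univ_two_mul {M : Type*} [AddCommMonoid M] (n : ℕ) (f : Fin (2 * n) → M) :
    ∑ j, f j = ∑ i : Fin n, f ⟨i, by omega⟩ + ∑ i : Fin n, f ⟨i + n, by omega⟩ := by
  rw [← (finCongr (two_mul n)).symm.sum_comp, Fin.sum_univ_add]
  congr 1
  exact Finset.sum_congr rfl fun i _ => congrArg f (Fin.ext (by simp [add_comm]))

def complexify (n : ℕ) : EuclideanSpace ℝ (Fin (2 * n)) →ₗ[ℝ] EuclideanSpace ℂ (Fin n) where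
  toFun x := WithLp.toLp 2 fun i => ⟨x ⟨i, by omega⟩, x ⟨i + n, by omega⟩⟩
  map_add' x y := by ext i : 1; apply Complex.ext <;> simp
  map_smul' c x := by ext i : 1; apply Complex.ext <;> simp

theorem inner_complexify (n : ℕ) (x y : EuclideanSpace ℝ (Fin (2 * n))) :
    inner ℂ (complexify n x) (complexify n y) = ⟨inner ℝ x y, -symA n x y⟩ := by
  apply Complex.ext
  · simp [complexify, PiLp.inner_apply, Fin.sum_univ_two_mul (f := fun j => x j * y j),
      ← Finset.sum_add_distrib, mul_comm]
  · simp only [complexify, LinearMap.coe_mk, AddHom.coe_mk, PiLp.inner_apply, symA]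
    simp [-Finset.sum_sub_distrib, ← Finset.sum_neg_distrib]
    exact Finset.sum_congr rfl fun i _ => by ring

theorem norm_complexify (n : ℕ) (x : EuclideanSpace ℝ (Fin (2 * n))) :
    ‖complexify n x‖ = ‖x‖ := by
  have h := inner_self_eq_norm_sq (𝕜 := ℂ) (complexify n x)
  rw [inner_complexify, real_inner_self_eq_norm_sq] at h
  exact (pow_left_inj₀ (norm_nonneg _) (norm_nonneg _) two_ne_zero).mp h.symm

theorem symA_eq_neg_im_inner (n : ℕ) (x y : EuclideanSpace ℝ (Fin (2 * n))) :
    symA n x y = -(inner ℂ (complexify n x) (complexify n y)).im := by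
  simp [inner_complexify]

theorem hMul_hInv_telescope (n : ℕ) (x y z : Heis n) :
    hMul n (hMul n (hInv n z) y) (hMul n (hInv n y) x) = hMul n (hInv n z) x := by
  refine Prod.ext (by simp only [hMul, hInv]; abel) ?_
  simp only [hMul, hInv, symA_eq_neg_im_inner, map_add, map_neg, inner_add_left, inner_add_right,
    inner_neg_left, inner_neg_right, ← RCLike.im_to_complex, inner_self_im]
  ring

def Kcomplex (n : ℕ) (x : Heis n) : ℂ := ⟨‖x.1‖ ^ 2, x.2⟩

theorem Knorm_sq (n : ℕ) (x : Heis n) : Knorm n x ^ 2 = ‖Kcomplex n x‖ := by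
  rw [Knorm, ← Real.rpow_natCast, ← Real.rpow_mul (by positivity), Complex.norm_def,
    Complex.normSq_mk, Real.sqrt_eq_rpow]
  norm_num [Kcomplex]
  ring_nf

theorem Knorm_nonneg (n : ℕ) (x : Heis n) : 0 ≤ Knorm n x := by
  unfold Knorm; positivity

theorem norm_fst_le_Knorm (n : ℕ) (x : Heis n) : ‖x.1‖ ≤ Knorm n x := by
  rw [← pow_le_pow_iff_left₀ (norm_nonneg _) (Knorm_nonneg n x) two_ne_zero, Knorm_sq]
  exact Complex.re_le_norm (Kcomplex n x)

theorem Kcomplex_hMul (n : ℕ) (x y : Heis n) :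
    Kcomplex n (hMul n x y) =
      Kcomplex n x + Kcomplex n y + 2 * conj (inner ℂ (complexify n x.1) (complexify n y.1)) := by
  apply Complex.ext
  · simp [Kcomplex, hMul, inner_complexify, norm_add_sq_real]
    ring
  · simp [Kcomplex, hMul, inner_complexify]

theorem Knorm_hMul_le (n : ℕ) (x y : Heis n) :
    Knorm n (hMul n x y) ≤ Knorm n x + Knorm n y := by
  have hx := norm_fst_le_Knorm n x
  have hy := norm_fst_le_Knorm n y
  have hsum := add_nonneg (Knorm_nonneg n x) (Knorm_nonneg n y)
  rw [← pow_le_pow_iff_left₀ (Knorm_nonneg n _) hsum two_ne_zero]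
  calc Knorm n (hMul n x y) ^ 2
      ≤ ‖Kcomplex n x‖ + ‖Kcomplex n y‖ + 2 * (‖x.1‖ * ‖y.1‖) := by
        rw [Knorm_sq, Kcomplex_hMul, ← norm_complexify n x.1, ← norm_complexify n y.1]
        grw [norm_add₃_le, norm_mul, Complex.norm_conj, norm_inner_le_norm]
        norm_num
    _ ≤ (Knorm n x + Knorm n y) ^ 2 := by
        rw [← Knorm_sq, ← Knorm_sq]
        nlinarith [mul_le_mul hx hy (norm_nonneg _) (Knorm_nonneg n x)]

theorem Kdist_triangle (n : ℕ) (x y z : Heis n) : Kdist n x z ≤ Kdist n x y + Kdist n y z := by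
  rw [Kdist, Kdist, Kdist, ← hMul_hInv_telescope n x y z, add_comm]
  exact Knorm_hMul_le n _ _

/-- The Korányi gauge satisfies the (quasi-norm) triangle inequality, equivalently
`d(x,z) ≤ d(x,y) + d(y,z)`. -/
theorem stmt1 (n : ℕ) :
    (∀ x y z : Heis n, Kdist n x z ≤ Kdist n x y + Kdist n y z) ∧
    (∀ x y : Heis n, Knorm n (hMul n x y) ≤ Knorm n x + Knorm n y) :=
  ⟨Kdist_triangle n, Knorm_hMul_le n⟩
end
end

section
/- Stopping-region packing: let Δ be a family of 'dyadic cubes' for a k-regular measure μ satisfying the standard Christ–David properties, and let 𝔉 be a family of pairwise disjoint subfamilies ('stopping time regions') 𝒮 ⊂ Δ, each with a top cube Q(𝒮) and a set min(𝒮) of minimal cubes. If 𝔉₂ = { 𝒮 ∈ 𝔉 : μ(Q(𝒮) \ ⋃_{Q ∈ min(𝒮)} Q) ≥ μ(Q(𝒮))/4 }, then the sets Q(𝒮) \ ⋃_{Q∈min(𝒮)} Q are pairwise disjoint over 𝒮 ∈ 𝔉, and consequently Σ_{𝒮∈𝔉₂, Q(𝒮)⊂R} μ(Q(𝒮)) ≤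 4 μ(R) for every cube R ∈ Δ. -/
/-! If `Q(𝒮₁) ⊊ Q(𝒮₂)`, a minimal element of the (finite) set of cubes of `𝒮₂` above `Q(𝒮₁)`
is a minimal cube of `𝒮₂`: otherwise its child containing `Q(𝒮₁)` would lie in `𝒮₂` and be
smaller. Hence `Q(𝒮₁) \ ⋃ min(𝒮₁)` lies in `⋃ min(𝒮₂)`, which gives the disjointness; the
packing bound follows by summing `μ(Q(𝒮)) ≤ 4 μ(Q(𝒮) \ ⋃ min(𝒮))` over disjoint sets in `R`. -/

open MeasureTheory

/-- The minimal cubes of a family of cubes. -/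
def minCubes {X : Type*} (S : Set (Set X)) : Set (Set X) :=
  {Q ∈ S | ∀ R ∈ S, R ⊆ Q → R = Q}

section

variable {X : Type*}

theorem exists_mem_minCubes_superset {S : Set (Set X)} {A : Set X}
    (hfin : {Q ∈ S | A ⊆ Q}.Finite) (hne : ∃ Q ∈ S, A ⊆ Q)
    (hdescend : ∀ Q ∈ S, A ⊆ Q → Q ∉ minCubes S → ∃ Q' ∈ S, A ⊆ Q' ∧ Q' ⊂ Q) :
    ∃ Q ∈ minCubes S, A ⊆ Q := by
  obtain ⟨Q, ⟨hQS, hAQ⟩, hQmin⟩ := hfin.exists_minimal hne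
  refine ⟨Q, ?_, hAQ⟩
  by_contra hnotmin
  obtain ⟨Q', hQ'S, hAQ', hQ'Q⟩ := hdescend Q hQS hAQ hnotmin
  exact hQ'Q.not_subset (hQmin ⟨hQ'S, hAQ'⟩ hQ'Q.subset)

theorem pairwise_disjoint_diff_sUnion {ι : Type*} {E : ι → Set X} {M : ι → Set (Set X)}
    (hnest : ∀ i j, E i ⊆ E j ∨ E j ⊆ E i ∨ Disjoint (E i) (E j))
    (hcover : ∀ i j, i ≠ j → E i ⊆ E j → ∃ Q ∈ M j, E i ⊆ Q) :
    Pairwise (Function.onFun Disjoint fun i => E i \ ⋃₀ M i) := by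
  intro i j hij
  rcases hnest i j with hij' | hji | hdisj
  · obtain ⟨Q, hQ, hiQ⟩ := hcover i j hij hij'
    exact Set.disjoint_left.2 fun x hxi hxj => hxj.2 ⟨Q, hQ, hiQ hxi.1⟩
  · obtain ⟨Q, hQ, hjQ⟩ := hcover j i hij.symm hji
    exact Set.disjoint_left.2 fun x hxi hxj => hxi.2 ⟨Q, hQ, hjQ hxj.1⟩
  · exact hdisj.mono Set.sdiff_subset Set.sdiff_subset

theorem tsum_measure_le_mul_of_pairwise_disjoint [MeasurableSpace X] {μ : Measure X}
    {ι : Type*} [Countable ι] {E F : ι → Set X} {R : Set X} {c : ENNReal}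
    (hF : ∀ i, MeasurableSet (F i)) (hdisj : Pairwise (Function.onFun Disjoint F))
    (hle : ∀ i, μ (E i) ≤ c * μ (F i)) (hFR : ∀ i, F i ⊆ R) :
    ∑' i, μ (E i) ≤ c * μ R :=
  calc ∑' i, μ (E i) ≤ ∑' i, c * μ (F i) := ENNReal.tsum_le_tsum hle
    _ = c * μ (⋃ i, F i) := by rw [ENNReal.tsum_mul_left, measure_iUnion hdisj hF]
    _ ≤ c * μ R := by gcongr; exact Set.iUnion_subset hFR

end

theorem stmt17_general {X : Type*} [MeasurableSpace X] (μ : Measure X)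
    {ι : Type*} [Countable ι]
    (Δ : Set (Set X)) (hmeas : ∀ Q ∈ Δ, MeasurableSet Q)
    (hnest : ∀ Q ∈ Δ, ∀ R ∈ Δ, Q ⊆ R ∨ R ⊆ Q ∨ Q ∩ R = ∅)
    (child : Set X → Set (Set X))
    (hchildsub : ∀ Q ∈ Δ, ∀ Q' ∈ child Q, Q' ⊂ Q)
    (hchildcover : ∀ Q ∈ Δ, ∀ R ∈ Δ, R ⊂ Q → ∃ Q' ∈ child Q, R ⊆ Q')
    (𝒮 : ι → Set (Set X))
    (hSΔ : ∀ i, 𝒮 i ⊆ Δ)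
    (hScount : ∀ i, (𝒮 i).Countable)
    (hdisj : ∀ i j, i ≠ j → 𝒮 i ∩ 𝒮 j = ∅)
    (top : ι → Set X)
    (htopmem : ∀ i, top i ∈ 𝒮 i)
    (hchildin : ∀ i, ∀ Q ∈ 𝒮 i, Q ∉ minCubes (𝒮 i) → child Q ⊆ 𝒮 i)
    (hfinanc : ∀ i, ∀ S₀ ∈ Δ, {Q ∈ 𝒮 i | S₀ ⊆ Q}.Finite) :
    (Pairwise (Function.onFun Disjoint
        (fun i => top i \ ⋃₀ minCubes (𝒮 i)))) ∧
    ∀ R ∈ Δ,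
      (∑' j : {i : ι // μ (top i) / 4 ≤ μ (top i \ ⋃₀ minCubes (𝒮 i)) ∧ top i ⊆ R},
        μ (top j.1)) ≤ 4 * μ R := by
  have htopΔ i : top i ∈ Δ := hSΔ i (htopmem i)
  have hpair : Pairwise (Function.onFun Disjoint fun i => top i \ ⋃₀ minCubes (𝒮 i)) := by
    refine pairwise_disjoint_diff_sUnion (fun i j => ?_) fun i j hij hsub => ?_
    · simpa only [Set.disjoint_iff_inter_eq_empty] using hnest _ (htopΔ i) _ (htopΔ j)
    refine exists_mem_minCubes_superset (hfinanc j _ (htopΔ i)) ⟨top j, htopmem j, hsub⟩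
      fun Q hQ hiQ hQnotmin => ?_
    have hne : top i ≠ Q := fun h =>
      (hdisj i j hij).subset ⟨htopmem i, h ▸ hQ⟩
    obtain ⟨Q', hQ'child, hiQ'⟩ :=
      hchildcover Q (hSΔ j hQ) (top i) (htopΔ i) (hiQ.ssubset_of_ne hne)
    exact ⟨Q', hchildin j Q hQ hQnotmin hQ'child, hiQ', hchildsub Q (hSΔ j hQ) Q' hQ'child⟩
  refine ⟨hpair, fun R _ => ?_⟩
  refine tsum_measure_le_mul_of_pairwise_disjoint (fun j => ?_)
    (hpair.comp_of_injective Subtype.val_injective)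
    (fun j => (ENNReal.div_le_iff' (by norm_num) (by norm_num)).1 j.2.1)
    fun j => Set.sdiff_subset.trans j.2.2
  exact (hmeas _ (htopΔ j)).diff <| .sUnion ((hScount j).mono fun Q hQ => hQ.1)
    fun Q hQ => hmeas Q (hSΔ j hQ.1)

/-- Stopping-region packing: the sets `Q(𝒮) \ ⋃ min(𝒮)` are pairwise disjoint over the
stopping regions `𝒮`, and consequently the top cubes of regions in
`𝔉₂ = {𝒮 : μ(Q(𝒮) \ ⋃ min(𝒮)) ≥ μ(Q(𝒮))/4}` satisfy a Carleson packing bound with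
constant `4`. -/
theorem stmt17 {X : Type*} [MeasurableSpace X] (μ : Measure X)
    {ι : Type*} [Countable ι]
    (Δ : Set (Set X)) (hmeas : ∀ Q ∈ Δ, MeasurableSet Q)
    (hnest : ∀ Q ∈ Δ, ∀ R ∈ Δ, Q ⊆ R ∨ R ⊆ Q ∨ Q ∩ R = ∅)
    (child : Set X → Set (Set X))
    (hchildΔ : ∀ Q ∈ Δ, child Q ⊆ Δ)
    (hchildsub : ∀ Q ∈ Δ, ∀ Q' ∈ child Q, Q' ⊂ Q)
    (hchildcover : ∀ Q ∈ Δ, ∀ R ∈ Δ, R ⊂ Q → ∃ Q' ∈ child Q, R ⊆ Q')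
    (𝒮 : ι → Set (Set X))
    (hSΔ : ∀ i, 𝒮 i ⊆ Δ)
    (hScount : ∀ i, (𝒮 i).Countable)
    (hdisj : ∀ i j, i ≠ j → 𝒮 i ∩ 𝒮 j = ∅)
    (top : ι → Set X)
    (htopmem : ∀ i, top i ∈ 𝒮 i)
    (htop : ∀ i, ∀ Q ∈ 𝒮 i, Q ⊆ top i)
    (htopdist : ∀ i j, i ≠ j → top i ≠ top j)
    (hcoh : ∀ i, ∀ Q ∈ 𝒮 i, ∀ R ∈ Δ, Q ⊆ R → R ⊆ top i → R ∈ 𝒮 i)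
    (hchildin : ∀ i, ∀ Q ∈ 𝒮 i, Q ∉ minCubes (𝒮 i) → child Q ⊆ 𝒮 i)
    (hfinanc : ∀ i, ∀ S₀ ∈ Δ, {Q ∈ 𝒮 i | S₀ ⊆ Q}.Finite) :
    (Pairwise (Function.onFun Disjoint
        (fun i => top i \ ⋃₀ minCubes (𝒮 i)))) ∧
    ∀ R ∈ Δ,
      (∑' j : {i : ι // μ (top i) / 4 ≤ μ (top i \ ⋃₀ minCubes (𝒮 i)) ∧ top i ⊆ R},
        μ (top j.1)) ≤ 4 * μ R :=
  stmt17_general μ Δ hmeas hnest child hchildsub hchildcover 𝒮 hSΔ hScount hdisj top htopmem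
    hchildin hfinanc
end

section
/- Bounded overlap of the Carleson boxes of stopping regions: with notation as in the paper, for each stopping region 𝒮 with top cube Q(𝒮) and stopping-distance function h_𝒮(x) = inf{ d(x,Q) + diam(Q) : Q ∈ 𝒮 }, set E_𝒮 = { (x,t) ∈ K₀Q(𝒮) × (0, K₀ diam Q(𝒮)) : h_𝒮(x) < K₀ t }. Then there is a constant C (depending on K₀ and the regularity data) such that Σ_{𝒮∈𝔉} χ_{E_𝒮}(x,t) ≤ C for all (x,t) ∈ E × ℝ. -/
/-!
For each region counted at `(x, t)`, take a cube `Q` of the region with `d(x, Q) + diam Q < K₀ t`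
and climb to its first ancestor of diameter `> t / K₀`. Coherence keeps the ancestors inside the
region (up to its top cube, whose diameter is already `> t / K₀`), and a parent is at most
`D² α` times larger than its child, so the chosen cube has diameter `≈ t` and lies in a ball of
radius `≈ t` around `x`. Its generation therefore lies in a window of boundedly many generations,
and distinct regions give distinct cubes. Cubes of one generation are disjoint with mass `≳ t^k`,
so upper `k`-regularity of `μ` bounds their number by a constant independent of `(x, t)`.
-/

open Metric MeasureTheory

open Set ENNReal

theorem Metric.isBounded_of_diam_pos {X : Type*} [PseudoMetricSpace X] {s : Set X}
    (hs : 0 < diam s) : Bornology.IsBounded s := by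
  by_contra h
  exact hs.ne' (diam_eq_zero_of_unbounded h)

theorem ENat.le_natCeil_of_mul_ofReal_le {e : ℕ∞} {M m : ℝ} (hm : 0 < m)
    (h : (e : ℝ≥0∞) * ENNReal.ofReal m ≤ ENNReal.ofReal (M * m)) : e ≤ ⌈M⌉₊ := by
  rw [ENNReal.ofReal_mul' hm.le,
    ENNReal.mul_le_mul_iff_left (ENNReal.ofReal_pos.2 hm).ne' ENNReal.ofReal_ne_top] at h
  rw [← ENat.toENNReal_le, ENat.toENNReal_coe, ← ENNReal.ofReal_natCast]
  exact h.trans (ENNReal.ofReal_le_ofReal (Nat.le_ceil M))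

theorem encard_setOf_zpow_mem_Ioc_le {α a b : ℝ} (hα : 1 < α) {n : ℕ} (hn : b ≤ a * α ^ n) :
    {j : ℤ | α ^ j ∈ Ioc a b}.encard ≤ 2 * n := by
  set W := {j : ℤ | α ^ j ∈ Ioc a b}
  rcases W.eq_empty_or_nonempty with hW | ⟨j, hj⟩
  · simp [hW]
  have hlt : ∀ i ∈ W, ∀ i' ∈ W, i' < i + n := by
    intro i hi i' hi'
    refine (zpow_lt_zpow_iff_right₀ hα).1 ?_
    calc α ^ i' ≤ a * α ^ n := hi'.2.trans hn
      _ < α ^ i * α ^ n := mul_lt_mul_of_pos_right hi.1 (by positivity)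
      _ = α ^ (i + n) := by rw [zpow_add₀ (by positivity), zpow_natCast]
  calc W.encard ≤ (Finset.Ioo (j - n) (j + n) : Set ℤ).encard := by
        refine encard_le_encard fun i hi => ?_
        have := hlt i hi j hj
        have := hlt j hj i hi
        simp only [Finset.coe_Ioo, mem_Ioo]
        constructor <;> omega
    _ ≤ 2 * n := by
        rw [encard_coe_eq_coe_finsetCard, Int.card_Ioo]
        exact_mod_cast (by omega : (j + n - (j - n) - 1).toNat ≤ 2 * n)

section Packing

variable {X : Type*} [MeasurableSpace X]

theorem tsum_measure_le_of_pairwiseDisjoint (μ : Measure X)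
    {𝒞 : Set (Set X)} {A : Set X} (hmeas : ∀ Q ∈ 𝒞, MeasurableSet Q) (hd : 𝒞.PairwiseDisjoint id)
    (hA : ∀ Q ∈ 𝒞, Q ⊆ A) : ∑' Q : 𝒞, μ Q ≤ μ A :=
  (tsum_meas_le_meas_iUnion_of_disjoint μ (As := fun Q : 𝒞 => (Q : Set X))
    (fun Q => hmeas Q Q.2) fun Q R h => hd Q.2 R.2 (Subtype.coe_ne_coe.2 h)).trans
    (measure_mono (iUnion_subset fun Q => hA Q Q.2))

theorem encard_mul_le_encard_mul_measure (μ : Measure X)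
    {Δ : ℤ → Set (Set X)} (hmeas : ∀ j, ∀ Q ∈ Δ j, MeasurableSet Q)
    (hgendisj : ∀ j, ∀ Q ∈ Δ j, ∀ R ∈ Δ j, Q ≠ R → Q ∩ R = ∅)
    {W : Set ℤ} {A : Set X} {m : ℝ≥0∞} (hm : ∀ j ∈ W, ∀ Q ∈ Δ j, m ≤ μ Q)
    {𝒬 : Set (Set X)} (h𝒬 : 𝒬 ⊆ ⋃ j ∈ W, {Q ∈ Δ j | Q ⊆ A}) :
    𝒬.encard * m ≤ W.encard * μ A := by
  calc (𝒬.encard : ℝ≥0∞) * m ≤ (⋃ j ∈ W, {Q ∈ Δ j | Q ⊆ A}).encard * m := by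
        gcongr
    _ = ∑' _ : ⋃ j ∈ W, {Q ∈ Δ j | Q ⊆ A}, m := (tsum_set_const _ m).symm
    _ ≤ ∑' (j : W) (_ : {Q ∈ Δ j | Q ⊆ A}), m := tsum_biUnion_le_tsum (fun _ => m) _ _
    _ ≤ ∑' (j : W) (Q : {Q ∈ Δ j | Q ⊆ A}), μ Q :=
        ENNReal.tsum_le_tsum fun j => ENNReal.tsum_le_tsum fun Q => hm j j.2 Q Q.2.1
    _ ≤ ∑' _ : W, μ A := ENNReal.tsum_le_tsum fun j =>
        tsum_measure_le_of_pairwiseDisjoint μ (fun Q hQ => hmeas j Q hQ.1)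
          (fun Q hQ R hR hQR => disjoint_iff_inter_eq_empty.2 (hgendisj j Q hQ.1 R hR.1 hQR))
          fun Q hQ => hQ.2
    _ = W.encard * μ A := tsum_set_const _ _

end Packing

section Cubes

variable {X : Type*} [MetricSpace X] {Δ : ℤ → Set (Set X)} {α D : ℝ}

theorem diam_le_of_mem_succ (hα : 0 < α) (hD : 0 < D)
    (hdiam : ∀ j, ∀ Q ∈ Δ j, D⁻¹ * α ^ j ≤ diam Q ∧ diam Q ≤ D * α ^ j)
    {j : ℤ} {Q P : Set X} (hQ : Q ∈ Δ j) (hP : P ∈ Δ (j + 1)) : diam P ≤ D ^ 2 * α * diam Q :=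
  calc diam P ≤ D * α ^ (j + 1) := (hdiam _ P hP).2
    _ = D * α * α ^ j := by rw [zpow_add_one₀ hα.ne']; ring
    _ ≤ D * α * (D * diam Q) := by
        gcongr
        exact (inv_mul_le_iff₀ hD).1 (hdiam j Q hQ).1
    _ = D ^ 2 * α * diam Q := by ring

theorem zpow_mem_Ioc_of_diam (hD : 0 < D)
    (hdiam : ∀ j, ∀ Q ∈ Δ j, D⁻¹ * α ^ j ≤ diam Q ∧ diam Q ≤ D * α ^ j)
    {j : ℤ} {Q : Set X} (hQ : Q ∈ Δ j) {K c t : ℝ} (hK : 0 < K)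
    (htQ : t < K * diam Q) (hQt : diam Q ≤ c * t) : α ^ j ∈ Ioc (t / (K * D)) (D * c * t) := by
  refine ⟨(div_lt_iff₀ (by positivity)).2 ?_, ?_⟩
  · calc t < K * diam Q := htQ
      _ ≤ K * (D * α ^ j) := by gcongr; exact (hdiam j Q hQ).2
      _ = α ^ j * (K * D) := by ring
  · calc α ^ j ≤ D * diam Q := (inv_mul_le_iff₀ hD).1 (hdiam j Q hQ).1
      _ ≤ D * (c * t) := by gcongr
      _ = D * c * t := by ring

structure IsStoppingRegion (Δ : ℤ → Set (Set X)) (S : Set (Set X)) (T : Set X) : Prop where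
  subset_cubes : S ⊆ ⋃ j, Δ j
  top_mem : T ∈ S
  subset_top : ∀ Q ∈ S, Q ⊆ T
  coherent : ∀ Q ∈ S, ∀ j, ∀ R ∈ Δ j, Q ⊆ R → R ⊆ T → R ∈ S

namespace IsStoppingRegion

variable {S : Set (Set X)} {T : Set X}

theorem exists_superset_diam_mem_Ioc (hS : IsStoppingRegion Δ S T) (hα : 1 < α) (hD : 0 < D)
    (hdiam : ∀ j, ∀ Q ∈ Δ j, D⁻¹ * α ^ j ≤ diam Q ∧ diam Q ≤ D * α ^ j)
    (hne : ∀ j, ∀ Q ∈ Δ j, Q.Nonempty)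
    (hnest : ∀ j l, ∀ Q ∈ Δ j, ∀ R ∈ Δ l, Q ⊆ R ∨ R ⊆ Q ∨ Q ∩ R = ∅)
    (hparent : ∀ j, ∀ Q ∈ Δ j, ∃ R ∈ Δ (j + 1), Q ⊆ R)
    {r : ℝ} (hrT : r < diam T) {Q : Set X} (hQS : Q ∈ S) (hQr : diam Q ≤ r) :
    ∃ R ∈ S, Q ⊆ R ∧ diam R ∈ Ioc r (D ^ 2 * α * r) := by
  obtain ⟨j, hQj⟩ := mem_iUnion.1 (hS.subset_cubes hQS)
  obtain ⟨jT, hTj⟩ := mem_iUnion.1 (hS.subset_cubes hS.top_mem)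
  by_contra! hnone
  -- Otherwise the ancestors of `Q` in `S` all have diameter at most `r`, in every generation.
  have hchain : ∀ n : ℕ, ∃ R ∈ Δ (j + n), R ∈ S ∧ Q ⊆ R ∧ diam R ≤ r := by
    intro n
    induction n with
    | zero => exact ⟨Q, by simpa using hQj, hQS, subset_rfl, hQr⟩
    | succ n ih =>
      obtain ⟨R, hRj, hRS, hQR, hRr⟩ := ih
      obtain ⟨P, hPj, hRP⟩ := hparent _ R hRj
      have hPr : diam P ≤ D ^ 2 * α * r :=
        (diam_le_of_mem_succ (by linarith) hD hdiam hRj hPj).trans (by gcongr)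
      rcases hnest _ _ P hPj T hTj with hPT | hTP | hPT
      · have hPS := hS.coherent R hRS _ P hPj hRP hPT
        refine ⟨P, by push_cast; rwa [← add_assoc], hPS, hQR.trans hRP, ?_⟩
        by_contra! hrP
        exact hnone P hPS (hQR.trans hRP) ⟨hrP, hPr⟩
      · have hPb := isBounded_of_diam_pos <|
          (show 0 < D⁻¹ * α ^ (j + n + 1) by positivity).trans_le (hdiam _ P hPj).1
        exact (hnone T hS.top_mem (hS.subset_top Q hQS) ⟨hrT, (diam_mono hTP hPb).trans hPr⟩).elim
      · obtain ⟨y, hy⟩ := hne _ R hRj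
        exact absurd (hPT ▸ ⟨hRP hy, hS.subset_top R hRS hy⟩ : y ∈ (∅ : Set X)) id
  obtain ⟨n, hn⟩ := pow_unbounded_of_one_lt (D * r / α ^ j) hα
  obtain ⟨R, hRj, -, -, hRr⟩ := hchain n
  have hαj : 0 < α ^ j := by positivity
  have : α ^ j * α ^ n ≤ D * r :=
    calc α ^ j * α ^ n = α ^ (j + n) := by rw [zpow_add₀ (by positivity), zpow_natCast]
      _ ≤ D * diam R := (inv_mul_le_iff₀ hD).1 (hdiam _ R hRj).1
      _ ≤ D * r := by gcongr
  exact ((div_lt_iff₀' hαj).1 hn).not_ge this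

theorem exists_mem_zpow_mem_Ioc_subset_closedBall (hS : IsStoppingRegion Δ S T) (hα : 1 < α)
    (hD : 0 < D) (hdiam : ∀ j, ∀ Q ∈ Δ j, D⁻¹ * α ^ j ≤ diam Q ∧ diam Q ≤ D * α ^ j)
    (hne : ∀ j, ∀ Q ∈ Δ j, Q.Nonempty)
    (hnest : ∀ j l, ∀ Q ∈ Δ j, ∀ R ∈ Δ l, Q ⊆ R ∨ R ⊆ Q ∨ Q ∩ R = ∅)
    (hparent : ∀ j, ∀ Q ∈ Δ j, ∃ R ∈ Δ (j + 1), Q ⊆ R)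
    {K₀ : ℝ} (hK₀ : 1 ≤ K₀) {x : X} {t : ℝ} (ht : 0 < t) (htT : t < K₀ * diam T)
    (hxt : sInf ((fun Q => infDist x Q + diam Q) '' S) < K₀ * t) :
    ∃ R ∈ S, ∃ j, R ∈ Δ j ∧ α ^ j ∈ Ioc (t / (K₀ * D)) (D * (K₀ + D ^ 2 * α) * t) ∧
      R ⊆ closedBall x ((K₀ + (K₀ + D ^ 2 * α)) * t) := by
  have hK0 : 0 < K₀ := one_pos.trans_le hK₀
  obtain ⟨_, ⟨Q, hQS, rfl⟩, hxQ⟩ := exists_lt_of_csInf_lt ⟨_, mem_image_of_mem _ hS.top_mem⟩ hxt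
  have hxQ : infDist x Q + diam Q < K₀ * t := hxQ
  have hQne : Q.Nonempty := by
    obtain ⟨j, hQj⟩ := mem_iUnion.1 (hS.subset_cubes hQS)
    exact hne j Q hQj
  obtain ⟨R, hRS, hQR, htR, hRt⟩ :
      ∃ R ∈ S, Q ⊆ R ∧ t < K₀ * diam R ∧ diam R ≤ (K₀ + D ^ 2 * α) * t := by
    by_cases hQt : t < K₀ * diam Q
    · refine ⟨Q, hQS, subset_rfl, hQt, ?_⟩
      have : 0 ≤ D ^ 2 * α * t := by positivity
      linarith [infDist_nonneg (x := x) (s := Q)]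
    · obtain ⟨R, hRS, hQR, hrR, hRr⟩ := hS.exists_superset_diam_mem_Ioc hα hD hdiam hne hnest
        hparent ((div_lt_iff₀' hK0).2 htT) hQS ((le_div_iff₀' hK0).2 (not_lt.1 hQt))
      refine ⟨R, hRS, hQR, (div_lt_iff₀' hK0).1 hrR, hRr.trans ?_⟩
      calc D ^ 2 * α * (t / K₀) ≤ D ^ 2 * α * t :=
            mul_le_mul_of_nonneg_left (div_le_self ht.le hK₀) (by positivity)
        _ ≤ (K₀ + D ^ 2 * α) * t := by linarith [mul_pos hK0 ht]
  obtain ⟨j, hRj⟩ := mem_iUnion.1 (hS.subset_cubes hRS)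
  refine ⟨R, hRS, j, hRj, zpow_mem_Ioc_of_diam hD hdiam hRj hK0 htR hRt, fun y hy => ?_⟩
  have hRb := isBounded_of_diam_pos ((div_pos ht hK0).trans ((div_lt_iff₀' hK0).2 htR))
  rw [mem_closedBall, dist_comm]
  calc dist x y ≤ infDist x R + diam R := dist_le_infDist_add_diam hRb hy
    _ ≤ infDist x Q + diam R := by gcongr; exact infDist_le_infDist_of_subset hQR hQne
    _ ≤ (K₀ + (K₀ + D ^ 2 * α)) * t := by linarith [diam_nonneg (s := Q)]

end IsStoppingRegion

end Cubes

theorem stmt18_general {X : Type*} [MetricSpace X] [MeasurableSpace X] (μ : Measure X)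
    (E : Set X) (k : ℕ) (α D C_E K₀ : ℝ)
    (hα : 1 < α) (hD : 1 < D) (hK₀ : 1 ≤ K₀)
    -- Christ–David cubes `Δ j` of generation `j`
    (Δ : ℤ → Set (Set X))
    (hmeas : ∀ j, ∀ Q ∈ Δ j, MeasurableSet Q)
    (hne : ∀ j, ∀ Q ∈ Δ j, Q.Nonempty)
    (hgendisj : ∀ j, ∀ Q ∈ Δ j, ∀ R ∈ Δ j, Q ≠ R → Q ∩ R = ∅)
    (hnest : ∀ j l, ∀ Q ∈ Δ j, ∀ R ∈ Δ l, Q ⊆ R ∨ R ⊆ Q ∨ Q ∩ R = ∅)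
    (hdiam : ∀ j, ∀ Q ∈ Δ j, D⁻¹ * α ^ j ≤ diam Q ∧ diam Q ≤ D * α ^ j)
    (hmass : ∀ j, ∀ Q ∈ Δ j,
      ENNReal.ofReal (D⁻¹ * (α ^ j) ^ k) ≤ μ Q ∧
        μ Q ≤ ENNReal.ofReal (D * (α ^ j) ^ k))
    (hparent : ∀ j, ∀ Q ∈ Δ j, ∃ R ∈ Δ (j + 1), Q ⊆ R)
    -- upper `k`-regularity of `μ` on `E`
    (hreg : ∀ x ∈ E, ∀ r : ℝ, 0 < r →
        μ (closedBall x r) ≤ ENNReal.ofReal (C_E * r ^ k))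
    -- the stopping regions
    {ι : Type*} (𝒮 : ι → Set (Set X))
    (hSΔ : ∀ i, 𝒮 i ⊆ ⋃ j, Δ j)
    (hdisj : ∀ i j, i ≠ j → 𝒮 i ∩ 𝒮 j = ∅)
    (top : ι → Set X)
    (htopmem : ∀ i, top i ∈ 𝒮 i)
    (htop : ∀ i, ∀ Q ∈ 𝒮 i, Q ⊆ top i)
    (hcoh : ∀ i, ∀ Q ∈ 𝒮 i, ∀ j, ∀ R ∈ Δ j, Q ⊆ R → R ⊆ top i → R ∈ 𝒮 i) :
    ∃ C : ℕ, ∀ x ∈ E, ∀ t : ℝ,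
      {i : ι |
          infDist x (top i) ≤ (K₀ - 1) * diam (top i) ∧
          0 < t ∧ t < K₀ * diam (top i) ∧
          sInf ((fun Q => infDist x Q + diam Q) '' 𝒮 i) < K₀ * t}.encard
        ≤ (C : ℕ∞) := by
  have hD0 : 0 < D := one_pos.trans hD
  have hK0 : 0 < K₀ := one_pos.trans_le hK₀
  set B := K₀ + D ^ 2 * α
  obtain ⟨n, hn⟩ := pow_unbounded_of_one_lt (D * B * (K₀ * D)) hα
  refine ⟨⌈2 * n * (C_E * D * ((K₀ + B) * (K₀ * D)) ^ k)⌉₊, fun x hx t => ?_⟩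
  set S := {i : ι | infDist x (top i) ≤ (K₀ - 1) * diam (top i) ∧ 0 < t ∧
    t < K₀ * diam (top i) ∧ sInf ((fun Q => infDist x Q + diam Q) '' 𝒮 i) < K₀ * t}
  rcases S.eq_empty_or_nonempty with hS | ⟨-, -, ht, -⟩
  · simp [hS]
  choose! g hg𝒮 hg using fun i (hi : i ∈ S) =>
    IsStoppingRegion.exists_mem_zpow_mem_Ioc_subset_closedBall
      ⟨hSΔ i, htopmem i, htop i, hcoh i⟩ hα hD0 hdiam hne hnest hparent hK₀ ht hi.2.2.1 hi.2.2.2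
  have hinj : InjOn g S := fun i hi i' hi' hii' => by
    by_contra h
    exact (hdisj i i' h).subset ⟨hg𝒮 i hi, hii' ▸ hg𝒮 i' hi'⟩
  set W := {j : ℤ | α ^ j ∈ Ioc (t / (K₀ * D)) (D * B * t)}
  have hW : W.encard ≤ 2 * n := by
    refine encard_setOf_zpow_mem_Ioc_le hα ?_
    rw [div_mul_eq_mul_div, le_div_iff₀ (by positivity)]
    nlinarith
  have hmassW : ∀ j ∈ W, ∀ Q ∈ Δ j, ENNReal.ofReal (D⁻¹ * (t / (K₀ * D)) ^ k) ≤ μ Q :=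
    fun j hj Q hQ => (ENNReal.ofReal_le_ofReal (by gcongr; exact hj.1.le)).trans (hmass j Q hQ).1
  have hgW : g '' S ⊆ ⋃ j ∈ W, {Q ∈ Δ j | Q ⊆ closedBall x ((K₀ + B) * t)} := by
    rintro _ ⟨i, hi, rfl⟩
    obtain ⟨j, hj, hjW, hball⟩ := hg i hi
    exact mem_biUnion hjW ⟨hj, hball⟩
  have hcount := encard_mul_le_encard_mul_measure μ hmeas hgendisj hmassW hgW
  rw [hinj.encard_image] at hcount
  refine ENat.le_natCeil_of_mul_ofReal_le (by positivity) (hcount.trans ?_)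
  calc (W.encard : ℝ≥0∞) * μ (closedBall x ((K₀ + B) * t))
      ≤ (2 * n : ℕ) * ENNReal.ofReal (C_E * ((K₀ + B) * t) ^ k) := by
        gcongr
        · exact mod_cast hW
        · exact hreg x hx _ (by positivity)
    _ = _ := by
        rw [← ENNReal.ofReal_natCast, ← ENNReal.ofReal_mul (by positivity)]
        congr 1
        rw [div_pow, mul_pow, mul_pow (K₀ + B)]
        field_simp
        push_cast
        ring

/-- Bounded overlap of the Carleson boxes of the stopping regions: with
`h_𝒮(x) = inf { d(x,Q) + diam Q : Q ∈ 𝒮 }` and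
`E_𝒮 = {(x,t) ∈ K₀Q(𝒮) × (0, K₀ diam Q(𝒮)) : h_𝒮(x) < K₀ t}`, there is a constant `C`
(depending on `K₀` and the regularity data) with `Σ_𝒮 χ_{E_𝒮}(x,t) ≤ C` for all
`(x,t) ∈ E × ℝ`. -/
theorem stmt18 {X : Type*} [MetricSpace X] [MeasurableSpace X] (μ : Measure X)
    (E : Set X) (k : ℕ) (α D C_E K₀ : ℝ)
    (hα : 1 < α) (hD : 1 < D) (hCE : 0 < C_E) (hK₀ : 1 ≤ K₀)
    -- Christ–David cubes `Δ j` of generation `j`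
    (Δ : ℤ → Set (Set X))
    (hmeas : ∀ j, ∀ Q ∈ Δ j, MeasurableSet Q)
    (hsubE : ∀ j, ∀ Q ∈ Δ j, Q ⊆ E)
    (hne : ∀ j, ∀ Q ∈ Δ j, Q.Nonempty)
    (hgendisj : ∀ j, ∀ Q ∈ Δ j, ∀ R ∈ Δ j, Q ≠ R → Q ∩ R = ∅)
    (hnest : ∀ j l, ∀ Q ∈ Δ j, ∀ R ∈ Δ l, Q ⊆ R ∨ R ⊆ Q ∨ Q ∩ R = ∅)
    (hdiam : ∀ j, ∀ Q ∈ Δ j, D⁻¹ * α ^ j ≤ diam Q ∧ diam Q ≤ D * α ^ j)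
    (hmass : ∀ j, ∀ Q ∈ Δ j,
      ENNReal.ofReal (D⁻¹ * (α ^ j) ^ k) ≤ μ Q ∧
        μ Q ≤ ENNReal.ofReal (D * (α ^ j) ^ k))
    (hparent : ∀ j, ∀ Q ∈ Δ j, ∃ R ∈ Δ (j + 1), Q ⊆ R)
    -- upper `k`-regularity of `μ` on `E`
    (hreg : ∀ x ∈ E, ∀ r : ℝ, 0 < r →
        μ (closedBall x r) ≤ ENNReal.ofReal (C_E * r ^ k))
    -- the stopping regions
    {ι : Type*} (𝒮 : ι → Set (Set X))
    (hSΔ : ∀ i, 𝒮 i ⊆ ⋃ j, Δ j)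
    (hdisj : ∀ i j, i ≠ j → 𝒮 i ∩ 𝒮 j = ∅)
    (top : ι → Set X)
    (htopmem : ∀ i, top i ∈ 𝒮 i)
    (htop : ∀ i, ∀ Q ∈ 𝒮 i, Q ⊆ top i)
    (hcoh : ∀ i, ∀ Q ∈ 𝒮 i, ∀ j, ∀ R ∈ Δ j, Q ⊆ R → R ⊆ top i → R ∈ 𝒮 i)
    (hfinanc : ∀ i, ∀ Q : Set X, Q ∈ ⋃ j, Δ j → {R ∈ 𝒮 i | Q ⊆ R}.Finite) :
    ∃ C : ℕ, ∀ x ∈ E, ∀ t : ℝ,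
      {i : ι |
          infDist x (top i) ≤ (K₀ - 1) * diam (top i) ∧
          0 < t ∧ t < K₀ * diam (top i) ∧
          sInf ((fun Q => infDist x Q + diam Q) '' 𝒮 i) < K₀ * t}.encard
        ≤ (C : ℕ∞) :=
  stmt18_general μ E k α D C_E K₀ hα hD hK₀ Δ hmeas hne hgendisj hnest hdiam hmass hparent hreg 𝒮
    hSΔ hdisj top htopmem htop hcoh
end
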